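/- arXiv:1812.10638 — 5 statements merged into one kernel-verified Lean document; each statement's English description precedes it below -/
import Mathlib

section
/- Define rational numbers b(n,k) for n ≥ 3 and 0 ≤ k ≤ n-3 by b(3,0) = 1 and the recursion b(n,k) = (n-3)·b(n-1,k) + (n+k-2)·b(n-1,k-1), with b(n,k) := 0 unless 0 ≤ k ≤ n-3. Then b(n, n-4) = (n-3)/3 · (2n-5)!! for all n ≥ 4. -/
/-!
The top coefficients satisfy `b(n+1, n-2) = (2n-3)·b(n, n-3)` because `b(n, n-2)` vanishes, so
`b(n, n-3) = (2n-5)!!`. Feeding this into the recursion on the next diagonal gives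
`b(n+1, n-3) = (n-2)·(2n-5)!! + (2n-4)·b(n, n-4)`, and the claimed closed form is preserved since
`(n-2) + (2n-4)(n-3)/3 = (n-2)(2n-3)/3`.
-/

lemma doubleFactorial_two_mul_succ_sub_five {n : ℕ} (hn : 3 ≤ n) :
    ((2 * (n + 1) - 5).doubleFactorial : ℚ) = (2 * n - 3) * (2 * n - 5).doubleFactorial := by
  rw [show 2 * (n + 1) - 5 = 2 * n - 5 + 2 by omega, Nat.doubleFactorial_add_two]
  push_cast [Nat.cast_sub (show 5 ≤ 2 * n by omega)]
  ring

lemma recursion_succ (b : ℕ → ℤ → ℚ)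
    (hrec : ∀ n : ℕ, 4 ≤ n → ∀ k : ℤ, 0 ≤ k → k ≤ (n : ℤ) - 3 →
      b n k = ((n : ℚ) - 3) * b (n - 1) k + ((n : ℚ) + (k : ℚ) - 2) * b (n - 1) (k - 1))
    {n : ℕ} (hn : 3 ≤ n) {k : ℤ} (hk₀ : 0 ≤ k) (hk : k ≤ (n : ℤ) - 2) :
    b (n + 1) k = ((n : ℚ) - 2) * b n k + ((n : ℚ) + k - 1) * b n (k - 1) := by
  rw [hrec (n + 1) (by omega) k hk₀ (by push_cast; omega), Nat.add_sub_cancel]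
  push_cast
  ring

lemma top_coefficient (b : ℕ → ℤ → ℚ) (hvanish : ∀ n : ℕ, b n ((n : ℤ) - 2) = 0)
    (h1 : b 3 0 = 1)
    (hrec : ∀ n : ℕ, 4 ≤ n → ∀ k : ℤ, 0 ≤ k → k ≤ (n : ℤ) - 3 →
      b n k = ((n : ℚ) - 3) * b (n - 1) k + ((n : ℚ) + (k : ℚ) - 2) * b (n - 1) (k - 1))
    {n : ℕ} (hn : 3 ≤ n) : b n ((n : ℤ) - 3) = (2 * n - 5).doubleFactorial := by
  induction n, hn using Nat.le_induction with
  | base => simpa using h1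
  | succ n hn ih =>
    have hstep := recursion_succ b hrec hn (k := (n : ℤ) - 2) (by omega) le_rfl
    rw [show (n : ℤ) - 2 - 1 = (n : ℤ) - 3 by ring, hvanish, ih] at hstep
    rw [doubleFactorial_two_mul_succ_sub_five hn, show ((n + 1 : ℕ) : ℤ) - 3 = (n : ℤ) - 2 by
      push_cast; ring, hstep]
    push_cast
    ring

lemma subtop_coefficient (b : ℕ → ℤ → ℚ) (hvanish : ∀ n : ℕ, b n ((n : ℤ) - 2) = 0)
    (hneg : b 3 (-1) = 0) (h1 : b 3 0 = 1)
    (hrec : ∀ n : ℕ, 4 ≤ n → ∀ k : ℤ, 0 ≤ k → k ≤ (n : ℤ) - 3 →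
      b n k = ((n : ℚ) - 3) * b (n - 1) k + ((n : ℚ) + (k : ℚ) - 2) * b (n - 1) (k - 1))
    {n : ℕ} (hn : 4 ≤ n) :
    b n ((n : ℤ) - 4) = ((n : ℚ) - 3) / 3 * (2 * n - 5).doubleFactorial := by
  induction n, hn using Nat.le_induction with
  | base =>
    have hstep := recursion_succ b hrec le_rfl (k := 0) le_rfl (by norm_num)
    norm_num [hneg, h1] at hstep
    norm_num [hstep, Nat.doubleFactorial]
  | succ n hn ih =>
    have hstep := recursion_succ b hrec (by omega : 3 ≤ n) (k := (n : ℤ) - 3) (by omega)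
      (by omega)
    rw [show (n : ℤ) - 3 - 1 = (n : ℤ) - 4 by ring, ih,
      top_coefficient b hvanish h1 hrec (by omega)] at hstep
    rw [doubleFactorial_two_mul_succ_sub_five (by omega), show ((n + 1 : ℕ) : ℤ) - 4 = (n : ℤ) - 3 by
      push_cast; ring, hstep]
    push_cast
    ring

/-- With `b(n,k)` defined by `b(3,0) = 1`, the recursion
`b(n,k) = (n-3)·b(n-1,k) + (n+k-2)·b(n-1,k-1)`, and `b(n,k) = 0` unless
`0 ≤ k ≤ n-3`, one has `b(n, n-4) = (n-3)/3 · (2n-5)!!` for all `n ≥ 4`. -/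
theorem subtop_coefficient_formula (b : ℕ → ℤ → ℚ)
    (h0 : ∀ (n : ℕ) (k : ℤ), (k < 0 ∨ (n : ℤ) - 3 < k ∨ n < 3) → b n k = 0)
    (h1 : b 3 0 = 1)
    (hrec : ∀ n : ℕ, 4 ≤ n → ∀ k : ℤ, 0 ≤ k → k ≤ (n : ℤ) - 3 →
      b n k = ((n : ℚ) - 3) * b (n - 1) k + ((n : ℚ) + (k : ℚ) - 2) * b (n - 1) (k - 1)) :
    ∀ n : ℕ, 4 ≤ n →
      b n ((n : ℤ) - 4) = (((n : ℚ) - 3) / 3) * (Nat.doubleFactorial (2 * n - 5) : ℚ) := by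
  intro n hn
  have hvanish : ∀ m : ℕ, b m ((m : ℤ) - 2) = 0 := fun m => h0 m _ (Or.inr (Or.inl (by omega)))
  exact subtop_coefficient b hvanish (h0 3 (-1) (Or.inl (by norm_num))) h1 hrec hn
end

section
/- The formal power series χ(y) ∈ y·Q[[y]] with χ(0) = 0 satisfying the differential equation χ' = (1 + χ)/(1 + y − χ) also satisfies the functional equation (1 + χ)·log(1 + χ) = 2χ − y, where log(1+χ) is the formal logarithm. -/
/-!
Put `F = (1 + χ) log(1 + χ) - 2χ + y`. Since `log(1 + χ)` is `log(1 + X)` substituted at `χ`, the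
chain rule gives `(1 + χ) log(1 + χ)' = χ'`; together with the differential equation in the form
`χ' (1 + y - χ) = 1 + χ` this yields `F' (1 + y - χ) = F`. A power series without constant term
satisfying a linear equation `F' = F g` vanishes, since its coefficients are determined inductively.
-/

open PowerSeries

/-- The formal logarithm `log(1+u) = ∑_{k≥1} (-1)^{k+1} u^k / k` for a power series
`u` with vanishing constant term, over a `ℚ`-algebra. -/
noncomputable def logOnePlus {R : Type*} [CommRing R] [Algebra ℚ R]
    (u : PowerSeries R) : PowerSeries R :=
  PowerSeries.mk fun n =>
    ∑ k ∈ Finset.Icc 1 n, ((-1 : ℚ) ^ (k + 1) / (k : ℚ)) • (PowerSeries.coeff n (u ^ k))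

namespace PowerSeries

theorem eq_zero_of_derivative_eq_mul {R : Type*} [CommRing R] [IsAddTorsionFree R]
    {f g : R⟦X⟧} (hf : constantCoeff f = 0) (h : d⁄dX R f = f * g) : f = 0 := by
  ext n
  induction n using Nat.strong_induction_on with
  | _ n ih =>
    cases n with
    | zero => simpa using hf
    | succ n =>
      have hsum : coeff n (f * g) = 0 := by
        rw [coeff_mul]
        refine Finset.sum_eq_zero fun p hp => ?_
        rw [ih p.1 (Finset.Nat.antidiagonal.fst_lt hp), map_zero, zero_mul]
      rw [← h, coeff_derivative, mul_comm, ← Nat.cast_succ, ← nsmul_eq_mul] at hsum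
      rw [map_zero]
      exact (nsmul_eq_zero_iff_right n.succ_ne_zero).mp hsum

theorem coeff_pow_eq_zero_of_lt {R : Type*} [CommSemiring R] {u : R⟦X⟧}
    (hu : constantCoeff u = 0) {n k : ℕ} (h : n < k) : coeff n (u ^ k) = 0 :=
  X_pow_dvd_iff.mp (pow_dvd_pow_of_dvd (X_dvd_iff.mpr hu) k) n h

theorem one_add_X_mul_derivative_log {A : Type*} [CommRing A] [Algebra ℚ A] :
    (1 + X) * d⁄dX A (log A) = 1 := by
  ext n
  rw [deriv_log, add_mul, one_mul, map_add]
  cases n with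
  | zero => simp
  | succ n => simp [pow_succ]

end PowerSeries

section LogOnePlus

variable {A : Type*} [CommRing A] [Algebra ℚ A]

theorem constantCoeff_logOnePlus (u : A⟦X⟧) : constantCoeff (logOnePlus u) = 0 := by
  rw [← coeff_zero_eq_constantCoeff_apply, logOnePlus, coeff_mk,
    Finset.Icc_eq_empty_of_lt zero_lt_one, Finset.sum_empty]

theorem logOnePlus_eq_subst_log {u : A⟦X⟧} (hu : constantCoeff u = 0) :
    logOnePlus u = (log A).subst u := by
  ext n
  rw [coeff_subst' (HasSubst.of_constantCoeff_zero' hu), logOnePlus, coeff_mk,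
    finsum_eq_sum_of_support_subset _ (s := Finset.Icc 1 n) ?_]
  · refine Finset.sum_congr rfl fun k hk => ?_
    rw [coeff_log, if_neg (by grind), Algebra.smul_def, smul_eq_mul]
  · intro k hk
    contrapose! hk
    obtain rfl | hk : k = 0 ∨ n < k := by grind
    · simp
    · simp [coeff_pow_eq_zero_of_lt hu hk]

theorem one_add_mul_derivative_logOnePlus {u : A⟦X⟧} (hu : constantCoeff u = 0) :
    (1 + u) * d⁄dX A (logOnePlus u) = d⁄dX A u := by
  have hs := HasSubst.of_constantCoeff_zero' hu
  have hinv : (1 + u) * (d⁄dX A (log A)).subst u = 1 := by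
    simpa [← coe_substAlgHom hs, substAlgHom_X] using
      congrArg (substAlgHom hs (R := A)) one_add_X_mul_derivative_log
  rw [logOnePlus_eq_subst_log hu, derivative_subst hs, ← mul_assoc, hinv, one_mul]

end LogOnePlus

/-- A formal power series `χ ∈ y·ℚ⟦y⟧` satisfying the differential equation
`χ' = (1+χ)/(1+y−χ)` also satisfies the functional equation
`(1+χ)·log(1+χ) = 2χ − y`. -/
theorem ode_implies_manin_equation (χ : PowerSeries ℚ)
    (h0 : PowerSeries.coeff 0 χ = 0)
    (hode : PowerSeries.derivativeFun χ = (1 + χ) * (1 + PowerSeries.X - χ)⁻¹) :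
    (1 + χ) * logOnePlus χ = 2 * χ - PowerSeries.X := by
  have hχ : constantCoeff χ = 0 := by rwa [← coeff_zero_eq_constantCoeff_apply]
  set B := 1 + X - χ
  have hB : constantCoeff B ≠ 0 := by simp [B, hχ]
  have hode' : d⁄dX ℚ χ * B = 1 + χ := (eq_mul_inv_iff_mul_eq hB).mp hode
  have hlog := one_add_mul_derivative_logOnePlus hχ
  set F := (1 + χ) * logOnePlus χ - (2 * χ - X)
  have hF : d⁄dX ℚ F = F * B⁻¹ := by
    refine (eq_mul_inv_iff_mul_eq hB).mpr ?_
    simp only [F, two_mul, map_sub, map_add, Derivation.leibniz, smul_eq_mul,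
      Derivation.map_one_eq_zero, derivative_X]
    linear_combination (logOnePlus χ - 1) * hode' + B * hlog
  have hF0 : constantCoeff F = 0 := by simp [F, hχ, constantCoeff_logOnePlus]
  exact sub_eq_zero.mp (eq_zero_of_derivative_eq_mul hF0 hF)
end

section
/- With the same recursive definition, the genus-one values satisfy χ̃(1,1)(κ) = −1/12 + κ/2 and χ̃(1,2)(κ) = 1/24 − 7κ/24 + κ²/2; in particular, evaluating at κ=1 and multiplying by n! gives χ(Mbar_{1,1}) = 5/12 and χ(Mbar_{1,2}) = 1/2. -/
/-!
Solving the recursion in the order χ̃(0,3), χ̃(1,1), χ̃(0,4), χ̃(1,2), only a few terms of the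
quadratic sums are stable at each step, and every integrand turns out to be affine in κ. Since a
polynomial over `ℚ` is determined by its values, an affine integrand is recognised by evaluating
it, and its antiderivative is read off directly.
-/

/-- The Harer–Zagier orbifold Euler characteristic
`χ(M_{g,n}) = (−1)^n (2g−1) B_{2g}/(2g)! · (2g+n−3)!`
(with the standard conventions at `g = 0, 1`). -/
noncomputable def chiM (g n : ℕ) : ℚ :=
  (-1) ^ n * (2 * (g : ℚ) - 1) * bernoulli (2 * g) / (Nat.factorial (2 * g) : ℚ) *
    (Nat.factorial (2 * g + n - 3) : ℚ)

/-- Formal antiderivative of a polynomial, vanishing at `0`. -/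
noncomputable def pint (p : Polynomial ℚ) : Polynomial ℚ :=
  p.sum fun n a => Polynomial.C (a / ((n : ℚ) + 1)) * Polynomial.X ^ (n + 1)

open Polynomial
open scoped Nat

theorem chiM_zero (n : ℕ) : chiM 0 n = -(-1) ^ n * (n - 3)! := by
  simp [chiM]

theorem chiM_one (n : ℕ) : chiM 1 n = (-1) ^ n * (n - 1)! / 12 := by
  simp [chiM, bernoulli_two, show 2 + n - 3 = n - 1 by omega]
  ring

theorem pint_zero : pint 0 = 0 :=
  sum_zero_index _

theorem pint_add (p q : ℚ[X]) : pint (p + q) = pint p + pint q := by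
  unfold pint
  apply sum_add_index <;> intros <;> simp [add_div, add_mul]

theorem pint_C_mul_X_pow (a : ℚ) (n : ℕ) :
    pint (C a * X ^ n) = C (a / (n + 1)) * X ^ (n + 1) := by
  unfold pint
  rw [C_mul_X_pow_eq_monomial, sum_monomial_index]
  simp

theorem pint_C_add_C_mul_X (a b : ℚ) :
    pint (C a + C b * X) = C a * X + C (b / 2) * X ^ 2 := by
  have h0 : pint (C a) = C a * X := by simpa using pint_C_mul_X_pow a 0
  have h1 : pint (C b * X) = C (b / 2) * X ^ 2 := by
    simpa [one_add_one_eq_two] using pint_C_mul_X_pow b 1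
  rw [pint_add, h0, h1]

theorem pint_eq_of_eval {p : ℚ[X]} {a b : ℚ} (hp : ∀ r, p.eval r = a + b * r) :
    pint p = C a * X + C (b / 2) * X ^ 2 := by
  rw [← pint_C_add_C_mul_X]
  congr 1
  exact funext fun r => by simp [hp]

def IsRefinedEulerRecursion (χ : ℕ → ℕ → ℚ[X]) : Prop :=
  ∀ g n : ℕ, 2 < 2 * g + n →
    χ g n = C (chiM g n / n !) +
      C (1 / 2) * pint
        ((if g = 0 then 0 else C (((n + 2) * (n + 1) : ℕ) : ℚ) * χ (g - 1) (n + 2)) +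
          ∑ g₁ ∈ Finset.range (g + 1), ∑ n₁ ∈ Finset.Icc 1 (n + 1),
            if 2 < 2 * g₁ + n₁ ∧ 2 < 2 * (g - g₁) + (n + 2 - n₁) then
              C ((n₁ * (n + 2 - n₁) : ℕ) : ℚ) * (χ g₁ n₁ * χ (g - g₁) (n + 2 - n₁))
            else 0)

namespace IsRefinedEulerRecursion

variable {χ : ℕ → ℕ → ℚ[X]}

theorem zero_three (hχ : IsRefinedEulerRecursion χ) : χ 0 3 = C (1 / 6) := by
  have h : χ 0 3 = C (1 / 6) + C (1 / 2) * pint 0 := by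
    have hrec := hχ 0 3 (by norm_num)
    norm_num [Finset.sum_Icc_succ_top, chiM_zero, Nat.factorial] at hrec ⊢
    exact hrec
  rw [h, pint_zero, mul_zero, add_zero]

theorem one_one (hχ : IsRefinedEulerRecursion χ) : χ 1 1 = C (-1 / 12) + C (1 / 2) * X := by
  have h : χ 1 1 = C (-1 / 12) + C (1 / 2) * pint (C 6 * χ 0 3) := by
    have hrec := hχ 1 1 (by norm_num)
    norm_num [Finset.sum_range_succ, Finset.sum_Icc_succ_top, chiM_one] at hrec ⊢
    exact hrec
  rw [h, pint_eq_of_eval (a := 1) (b := 0) (by simp [hχ.zero_three])]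
  exact funext fun r => by simp

theorem zero_four (hχ : IsRefinedEulerRecursion χ) : χ 0 4 = C (-1 / 24) + C (1 / 8) * X := by
  have h : χ 0 4 = C (-1 / 24) + C (1 / 2) * pint (9 * (χ 0 3 * χ 0 3)) := by
    have hrec := hχ 0 4 (by norm_num)
    norm_num [Finset.sum_Icc_succ_top, chiM_zero, Nat.factorial] at hrec ⊢
    exact hrec
  rw [h, pint_eq_of_eval (a := 1 / 4) (b := 0) (by simp [hχ.zero_three]; norm_num)]
  exact funext fun r => by simp; ring

theorem one_two (hχ : IsRefinedEulerRecursion χ) :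
    χ 1 2 = C (1 / 24) - C (7 / 24) * X + C (1 / 2) * X ^ 2 := by
  have h : χ 1 2 = C (1 / 24) +
      C (1 / 2) * pint (C 12 * χ 0 4 + (3 * (χ 0 3 * χ 1 1) + 3 * (χ 1 1 * χ 0 3))) := by
    have hrec := hχ 1 2 (by norm_num)
    norm_num [Finset.sum_range_succ, Finset.sum_Icc_succ_top, chiM_one] at hrec ⊢
    exact hrec
  rw [h, pint_eq_of_eval (a := -7 / 12) (b := 2)
    (by simp [hχ.zero_three, hχ.one_one, hχ.zero_four]; intro r; ring)]
  exact funext fun r => by simp; ring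

end IsRefinedEulerRecursion

/-- With `χ̃(g,n) ∈ ℚ[κ]` satisfying the quadratic recursion, the genus-one values
are `χ̃(1,1) = −1/12 + κ/2` and `χ̃(1,2) = 1/24 − 7κ/24 + κ²/2`; in particular
evaluating at `κ = 1` and multiplying by `n!` gives `χ(Mbar_{1,1}) = 5/12` and
`χ(Mbar_{1,2}) = 1/2`. -/
theorem refined_euler_genus_one (X : ℕ → ℕ → Polynomial ℚ)
    (hrec : ∀ g n : ℕ, 2 < 2 * g + n →
      X g n = Polynomial.C (chiM g n / (Nat.factorial n : ℚ)) +
        Polynomial.C (1 / 2) * pint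
          ((if g = 0 then 0 else
              Polynomial.C (((n + 2) * (n + 1) : ℕ) : ℚ) * X (g - 1) (n + 2)) +
            ∑ g₁ ∈ Finset.range (g + 1), ∑ n₁ ∈ Finset.Icc 1 (n + 1),
              if 2 < 2 * g₁ + n₁ ∧ 2 < 2 * (g - g₁) + (n + 2 - n₁) then
                Polynomial.C ((n₁ * (n + 2 - n₁) : ℕ) : ℚ) *
                  (X g₁ n₁ * X (g - g₁) (n + 2 - n₁))
              else 0)) :
    X 1 1 = Polynomial.C (-1 / 12) + Polynomial.C (1 / 2) * Polynomial.X ∧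
    X 1 2 = Polynomial.C (1 / 24) - Polynomial.C (7 / 24) * Polynomial.X +
      Polynomial.C (1 / 2) * Polynomial.X ^ 2 ∧
    (Nat.factorial 1 : ℚ) * (X 1 1).eval 1 = 5 / 12 ∧
    (Nat.factorial 2 : ℚ) * (X 1 2).eval 1 = 1 / 2 := by
  have hχ : IsRefinedEulerRecursion X := hrec
  have h11 := hχ.one_one
  have h12 := hχ.one_two
  exact ⟨h11, h12, by norm_num [h11], by norm_num [h12]⟩
end

section
/- Define Q(n,k)(x) for n ≥ 1 by Q(1,0) = 1, Q(n,−1) = 0, Q(1,k) = 0 for k ≥ 1, and Q(n,k)(x) = (x+n−1)·Q(n−1,k)(x) + (n+k−2)·Q(n−1,k−1)(x). Then ∑_{k=0}^{n−1} Q(n,k)(x) = (x+n)^{n−1} for all n ≥ 1. -/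
open Polynomial Finset

namespace ShorAux

/-- `P m z = (X + z)^m`. -/
noncomputable def P (m : ℕ) : ℤ → Polynomial ℤ := fun z => (X + C z) ^ m

/-- forward difference in the integer parameter -/
noncomputable def dlt (h : ℤ → Polynomial ℤ) : ℤ → Polynomial ℤ := fun z => h (z + 1) - h z

lemma iter_add : ∀ (i : ℕ) (g h : ℤ → Polynomial ℤ) (z : ℤ),
    dlt^[i] (fun w => g w + h w) z = dlt^[i] g z + dlt^[i] h z := by
  intro i
  induction i with
  | zero => intro g h z; simp
  | succ i ih =>
    intro g h z
    rw [Function.iterate_succ_apply, Function.iterate_succ_apply, Function.iterate_succ_apply]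
    have : dlt (fun w => g w + h w) = fun w => dlt g w + dlt h w := by
      funext w; simp [dlt]; ring
    rw [this, ih]

lemma iter_sub : ∀ (i : ℕ) (g h : ℤ → Polynomial ℤ) (z : ℤ),
    dlt^[i] (fun w => g w - h w) z = dlt^[i] g z - dlt^[i] h z := by
  intro i
  induction i with
  | zero => intro g h z; simp
  | succ i ih =>
    intro g h z
    rw [Function.iterate_succ_apply, Function.iterate_succ_apply, Function.iterate_succ_apply]
    have : dlt (fun w => g w - h w) = fun w => dlt g w - dlt h w := by
      funext w; simp [dlt]; ring
    rw [this, ih]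

lemma iter_constmul (A : Polynomial ℤ) : ∀ (i : ℕ) (h : ℤ → Polynomial ℤ) (z : ℤ),
    dlt^[i] (fun w => A * h w) z = A * dlt^[i] h z := by
  intro i
  induction i with
  | zero => intro h z; simp
  | succ i ih =>
    intro h z
    rw [Function.iterate_succ_apply, Function.iterate_succ_apply]
    have : dlt (fun w => A * h w) = fun w => A * dlt h w := by
      funext w; simp [dlt]; ring
    rw [this, ih]

lemma iter_zero : ∀ (i : ℕ) (z : ℤ), dlt^[i] (fun _ => (0 : Polynomial ℤ)) z = 0 := by
  intro i
  induction i with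
  | zero => intro z; simp
  | succ i ih =>
    intro z
    rw [Function.iterate_succ_apply]
    have : dlt (fun _ => (0 : Polynomial ℤ)) = fun _ => (0 : Polynomial ℤ) := by
      funext w; simp [dlt]
    rw [this, ih]

lemma iter_sum {α : Type*} [DecidableEq α] (i : ℕ) (s : Finset α) (g : α → ℤ → Polynomial ℤ)
    (z : ℤ) : dlt^[i] (fun w => ∑ a ∈ s, g a w) z = ∑ a ∈ s, dlt^[i] (g a) z := by
  induction s using Finset.induction with
  | empty => simp [iter_zero]
  | insert a s hnot ih =>
    have : (fun w => ∑ b ∈ insert a s, g b w) = fun w => g a w + ∑ b ∈ s, g b w := by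
      funext w; rw [Finset.sum_insert hnot]
    rw [this, iter_add, ih, Finset.sum_insert hnot]

lemma iter_shift : ∀ (i : ℕ) (h : ℤ → Polynomial ℤ) (z : ℤ),
    dlt^[i] (fun w => h (w + 1)) z = dlt^[i] h (z + 1) := by
  intro i
  induction i with
  | zero => intro h z; simp
  | succ i ih =>
    intro h z
    rw [Function.iterate_succ_apply, Function.iterate_succ_apply]
    have : dlt (fun w => h (w + 1)) = fun w => (dlt h) (w + 1) := by
      funext w; simp [dlt]
    rw [this, ih]

/-- iterated product rule specialized to a linear factor -/
lemma iter_lin : ∀ (i : ℕ) (h : ℤ → Polynomial ℤ) (c z : ℤ),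
    dlt^[i + 1] (fun w => C (w - c) * h w) z
      = C (z - c) * dlt^[i + 1] h z + C ((i : ℤ) + 1) * dlt^[i] h (z + 1) := by
  intro i
  induction i with
  | zero =>
    intro h c z
    simp only [zero_add, Function.iterate_one, Function.iterate_zero, id_eq, dlt, Nat.cast_zero]
    rw [show z + 1 - c = (z - c) + 1 by ring, map_add, map_one]
    ring
  | succ i ih =>
    intro h c z
    rw [show i + 1 + 1 = (i + 1) + 1 from rfl, Function.iterate_succ_apply]
    have hd : dlt (fun w => C (w - c) * h w) = fun w => C (w - c) * dlt h w + h (w + 1) := by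
      funext w
      simp only [dlt]
      rw [show (w + 1 - c) = (w - c) + 1 by ring, map_add, map_one]
      ring
    rw [hd, iter_add, ih (dlt h) c z, iter_shift]
    rw [← Function.iterate_succ_apply dlt i h, ← Function.iterate_succ_apply dlt (i+1) h]
    have hC : (C ((((i+1) : ℕ) : ℤ) + 1) : Polynomial ℤ) = C ((i : ℤ) + 1) + 1 := by
      rw [show ((((i+1) : ℕ) : ℤ) + 1) = ((i : ℤ) + 1) + 1 by push_cast; ring, map_add, map_one]
    rw [hC]
    ring

/-- binomial expansion of the forward difference of `P t` -/
lemma dlt_P (t : ℕ) : dlt (P t) = fun w => ∑ s ∈ range t, C ((t.choose s : ℤ)) * P s w := by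
  funext w
  simp only [dlt, P]
  have h1 : (X + C (w + 1) : Polynomial ℤ) = (X + C w) + 1 := by
    rw [map_add, map_one]; ring
  rw [h1, add_pow]
  rw [Finset.sum_range_succ]
  simp only [one_pow, mul_one, Nat.choose_self, Nat.cast_one]
  rw [add_sub_cancel_right]
  apply Finset.sum_congr rfl
  intro s _
  rw [Polynomial.C_eq_natCast]
  ring

lemma iter_P_zero : ∀ (j : ℕ), ∀ t < j, ∀ z : ℤ, dlt^[j] (P t) z = 0 := by
  intro j
  induction j with
  | zero => intro t ht; omega
  | succ j ih =>
    intro t ht z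
    rw [Function.iterate_succ_apply, dlt_P t, iter_sum]
    apply Finset.sum_eq_zero
    intro s hs
    rw [iter_constmul, ih s (by simp at hs; omega) z, mul_zero]

lemma iter_P_self : ∀ (j : ℕ) (z : ℤ), dlt^[j] (P j) z = C ((j.factorial : ℤ)) := by
  intro j
  induction j with
  | zero => intro z; simp [P, Nat.factorial]
  | succ j ih =>
    intro z
    rw [Function.iterate_succ_apply, dlt_P (j + 1), iter_sum, Finset.sum_range_succ]
    have h0 : ∀ s ∈ range j, dlt^[j] (fun w => C (((j+1).choose s : ℤ)) * P s w) z = 0 := by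
      intro s hs
      rw [iter_constmul, iter_P_zero j s (by simp at hs; omega) z, mul_zero]
    rw [Finset.sum_eq_zero h0, zero_add, iter_constmul, ih, ← map_mul]
    congr 1
    rw [Nat.choose_succ_self_right]
    push_cast [Nat.factorial_succ]
    ring

/-- rising factorial -/
def rise (t : ℤ) (j : ℕ) : ℤ := ∏ i ∈ Finset.range j, (t + (i : ℤ))

/-- `d j i = j!/i!` for `i ≤ j` -/
def d (j i : ℕ) : ℤ := (j.descFactorial (j - i) : ℤ)

lemma rise_zero (t : ℤ) : rise t 0 = 1 := by simp [rise]

lemma rise_succ (t : ℤ) (j : ℕ) : rise t (j + 1) = rise t j * (t + j) := by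
  simp [rise, Finset.prod_range_succ]

lemma rise_succ' (t : ℤ) (j : ℕ) : rise t (j + 1) = t * rise (t + 1) j := by
  rw [rise, Finset.prod_range_succ', rise]
  rw [Finset.prod_congr rfl (fun i (_ : i ∈ Finset.range j) =>
    (by push_cast; ring : t + ((i + 1 : ℕ) : ℤ) = (t + 1) + (i : ℤ)))]
  push_cast
  ring

lemma rise_one (j : ℕ) : rise 1 j = (j.factorial : ℤ) := by
  induction j with
  | zero => simp [rise_zero, Nat.factorial]
  | succ j ih => rw [rise_succ, ih]; push_cast [Nat.factorial_succ]; ring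

lemma d_self (j : ℕ) : d j j = 1 := by simp [d]

lemma d_succ_left (j i : ℕ) (h : i ≤ j) : d (j + 1) i = ((j : ℤ) + 1) * d j i := by
  unfold d
  have : j + 1 - i = (j - i) + 1 := by omega
  rw [this, Nat.succ_descFactorial_succ]
  push_cast
  ring

lemma d_mul_succ (j i : ℕ) (h : i < j) : d j (i + 1) * ((i : ℤ) + 1) = d j i := by
  unfold d
  have h1 : j - i = (j - (i + 1)) + 1 := by omega
  rw [h1, Nat.descFactorial_succ]
  have h2 : j - (j - (i + 1)) = i + 1 := by omega
  rw [h2]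
  push_cast
  ring

lemma rise_shift (j : ℕ) (t : ℤ) :
    rise (t + 1) j = ∑ i ∈ range (j + 1), d j i * rise t i := by
  induction j with
  | zero => simp [rise_zero, d]
  | succ j ih =>
    have key : rise (t + 1) (j + 1) = rise t (j + 1) + ((j : ℤ) + 1) * rise (t + 1) j := by
      rw [rise_succ (t+1) j, rise_succ' t j]
      ring
    have h2 : ∑ i ∈ range (j + 1 + 1), d (j + 1) i * rise t i
        = ((j:ℤ) + 1) * (∑ i ∈ range (j + 1), d j i * rise t i) + rise t (j + 1) := by
      rw [Finset.sum_range_succ, d_self, one_mul, Finset.mul_sum]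
      congr 1
      apply Finset.sum_congr rfl
      intro i hi
      rw [d_succ_left j i (by simp at hi; omega)]
      ring
    rw [key, ih, h2]
    ring

lemma rise_shift2 (j : ℕ) (t : ℤ) :
    t * rise (t + 2) j = ∑ i ∈ range (j + 1), d j i * rise t (i + 1) := by
  have : rise (t + 2) j = ∑ i ∈ range (j + 1), d j i * rise (t + 1) i := by
    have := rise_shift j (t + 1)
    rw [show t + 1 + 1 = t + 2 by ring] at this
    exact this
  rw [this, Finset.mul_sum]
  apply Finset.sum_congr rfl
  intro i _
  rw [rise_succ']
  ring

/-- `fP m j = Δ^j (X+z)^(m+j) |_{z = m+1}`, i.e. `f (m+1) j` in the informal notation. -/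
noncomputable def fP (m j : ℕ) : Polynomial ℤ := dlt^[j] (P (m + j)) ((m : ℤ) + 1)

lemma crossmul (m i : ℕ) :
    (X + C ((m : ℤ) + 1)) * fP m i
      = dlt^[i] (P (m + i + 1)) ((m : ℤ) + 1)
        - dlt^[i] (fun w => C (w - ((m : ℤ) + 1)) * P (m + i) w) ((m : ℤ) + 1) := by
  rw [fP, ← iter_constmul, ← iter_sub]
  have hfun : (fun w => (X + C ((m : ℤ) + 1)) * P (m + i) w)
      = fun w => P (m + i + 1) w - C (w - ((m : ℤ) + 1)) * P (m + i) w := by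
    funext w
    simp only [P]
    rw [pow_succ, map_sub]
    ring
  rw [hfun]

lemma keyterm0 (m : ℕ) :
    (X + C ((m : ℤ) + 1)) * fP m 0 + fP m 1 = fP (m + 1) 0 := by
  rw [crossmul]
  simp only [Function.iterate_zero, id_eq, add_zero]
  rw [sub_self, map_zero, zero_mul, sub_zero]
  rw [fP, fP]
  simp only [Function.iterate_one, Function.iterate_zero, id_eq]
  rw [dlt]
  push_cast
  ring_nf

lemma keytermS (m i : ℕ) :
    (X + C ((m : ℤ) + 1)) * fP m (i + 1) + fP m (i + 2)
      = fP (m + 1) (i + 1) - C ((i : ℤ) + 1) * fP (m + 1) i := by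
  rw [crossmul, show m + (i + 1) + 1 = m + i + 2 by omega, show m + (i + 1) = m + i + 1 by omega]
  rw [iter_lin i (P (m + i + 1)) ((m : ℤ) + 1) ((m : ℤ) + 1)]
  rw [sub_self, map_zero, zero_mul, zero_add]
  have hf2 : fP m (i + 2) = dlt^[i+1] (P (m + i + 2)) ((m : ℤ) + 2)
      - dlt^[i+1] (P (m + i + 2)) ((m : ℤ) + 1) := by
    rw [fP, show m + (i + 2) = m + i + 2 by ring, show i + 2 = (i + 1) + 1 from rfl,
      Function.iterate_succ_apply', dlt]
    ring_nf
  have hfp1 : fP (m + 1) (i + 1) = dlt^[i+1] (P (m + i + 2)) ((m : ℤ) + 2) := by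
    rw [fP, show m + 1 + (i + 1) = m + i + 2 by ring]
    push_cast
    ring_nf
  have hfpi : fP (m + 1) i = dlt^[i] (P (m + i + 1)) ((m : ℤ) + 2) := by
    rw [fP, show m + 1 + i = m + i + 1 by ring]
    push_cast
    ring_nf
  rw [hf2, hfp1, hfpi, show (m : ℤ) + 1 + 1 = (m : ℤ) + 2 by ring]
  ring

lemma telescope (m j : ℕ) :
    ∑ i ∈ range (j + 1), C (d j i) * ((X + C ((m : ℤ) + 1)) * fP m i + fP m (i + 1))
      = fP (m + 1) j := by
  have hterm : ∀ i : ℕ, (X + C ((m : ℤ) + 1)) * fP m i + fP m (i + 1)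
      = fP (m + 1) i - C ((i : ℤ)) * fP (m + 1) (i - 1) := by
    intro i
    cases i with
    | zero =>
      simp only [Nat.cast_zero, map_zero, zero_mul, sub_zero]
      exact keyterm0 m
    | succ i =>
      rw [keytermS, Nat.add_sub_cancel]
      push_cast
      ring
  calc ∑ i ∈ range (j + 1), C (d j i) * ((X + C ((m : ℤ) + 1)) * fP m i + fP m (i + 1))
      = ∑ i ∈ range (j + 1), (C (d j i) * fP (m + 1) i
          - C (d j i * (i : ℤ)) * fP (m + 1) (i - 1)) := by
        apply Finset.sum_congr rfl
        intro i _
        rw [hterm i, map_mul]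
        ring
    _ = ∑ i ∈ range (j + 1), C (d j i) * fP (m + 1) i
        - ∑ i ∈ range (j + 1), C (d j i * (i : ℤ)) * fP (m + 1) (i - 1) := by
        rw [Finset.sum_sub_distrib]
    _ = fP (m + 1) j := by
        have h1 : ∑ i ∈ range (j + 1), C (d j i) * fP (m + 1) i
            = ∑ i ∈ range j, C (d j i) * fP (m + 1) i + fP (m + 1) j := by
          rw [Finset.sum_range_succ, d_self, map_one, one_mul]
        have h2 : ∑ i ∈ range (j + 1), C (d j i * (i : ℤ)) * fP (m + 1) (i - 1)
            = ∑ i ∈ range j, C (d j i) * fP (m + 1) i := by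
          rw [Finset.sum_range_succ']
          have e0 : C (d j 0 * ((0:ℕ) : ℤ)) * fP (m + 1) (0 - 1) = 0 := by
            simp
          rw [e0, add_zero]
          apply Finset.sum_congr rfl
          intro i hi
          have hc : ((i + 1 : ℕ) : ℤ) = (i : ℤ) + 1 := by push_cast; ring
          rw [Nat.add_sub_cancel, hc, d_mul_succ j i (Finset.mem_range.mp hi)]
        rw [h1, h2]
        ring

section QPart

variable (Q : ℕ → ℤ → Polynomial ℤ)

/-- weighted sums of Shor polynomials: `WQ m j = ∑_{k<m+1} rise(m+1+k, j) · Q (m+1) k` -/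
noncomputable def WQ (m j : ℕ) : Polynomial ℤ :=
  ∑ k ∈ range (m + 1), C (rise ((m : ℤ) + 1 + (k : ℤ)) j) * Q (m + 1) (k : ℤ)

lemma Qzero (h1k : ∀ k : ℤ, 1 ≤ k → Q 1 k = 0)
    (hrec : ∀ n : ℕ, 2 ≤ n → ∀ k : ℤ, 0 ≤ k →
      Q n k = (X + C ((n : ℤ) - 1)) * Q (n - 1) k + C ((n : ℤ) + k - 2) * Q (n - 1) (k - 1)) :
    ∀ m : ℕ, 1 ≤ m → ∀ k : ℤ, (m : ℤ) ≤ k → Q m k = 0 := by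
  intro m
  induction m with
  | zero => omega
  | succ m ih =>
    intro _ k hk
    rcases Nat.eq_zero_or_pos m with hm | hm
    · subst hm
      exact h1k k (by exact_mod_cast hk)
    · have h2 : 2 ≤ m + 1 := by omega
      have hk0 : (0 : ℤ) ≤ k := by
        have hm' : (0 : ℤ) ≤ (m : ℤ) := Int.natCast_nonneg m
        push_cast at hk
        omega
      rw [hrec (m + 1) h2 k hk0, Nat.add_sub_cancel]
      rw [ih hm k (by push_cast at hk ⊢; omega), ih hm (k - 1) (by push_cast at hk ⊢; omega)]
      ring

lemma Wrec (hneg : ∀ n : ℕ, 1 ≤ n → Q n (-1) = 0)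
    (h1k : ∀ k : ℤ, 1 ≤ k → Q 1 k = 0)
    (hrec : ∀ n : ℕ, 2 ≤ n → ∀ k : ℤ, 0 ≤ k →
      Q n k = (X + C ((n : ℤ) - 1)) * Q (n - 1) k + C ((n : ℤ) + k - 2) * Q (n - 1) (k - 1))
    (m j : ℕ) :
    WQ Q (m + 1) j
      = ∑ i ∈ range (j + 1), C (d j i) * ((X + C ((m : ℤ) + 1)) * WQ Q m i + WQ Q m (i + 1)) := by
  have step1 : WQ Q (m + 1) j
      = ∑ k ∈ range (m + 2), (C (rise ((m : ℤ) + 2 + (k : ℤ)) j)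
          * ((X + C ((m : ℤ) + 1)) * Q (m + 1) (k : ℤ))
        + C (rise ((m : ℤ) + 2 + (k : ℤ)) j * ((m : ℤ) + (k : ℤ))) * Q (m + 1) ((k : ℤ) - 1)) := by
    rw [WQ]
    apply Finset.sum_congr (by norm_num)
    intro k _
    have hr : Q (m + 2) (k : ℤ)
        = (X + C (((m + 2 : ℕ) : ℤ) - 1)) * Q (m + 1) (k : ℤ)
          + C (((m + 2 : ℕ) : ℤ) + (k : ℤ) - 2) * Q (m + 1) ((k : ℤ) - 1) := by
      have := hrec (m + 2) (by omega) (k : ℤ) (Int.natCast_nonneg k)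
      rwa [show m + 2 - 1 = m + 1 by omega] at this
    rw [show ((m + 1 : ℕ) : ℤ) + 1 + (k : ℤ) = (m : ℤ) + 2 + (k : ℤ) by push_cast; ring,
      show m + 1 + 1 = m + 2 by omega, hr,
      show (((m + 2 : ℕ) : ℤ) - 1) = (m : ℤ) + 1 by push_cast; ring,
      show (((m + 2 : ℕ) : ℤ) + (k : ℤ) - 2) = (m : ℤ) + (k : ℤ) by push_cast; ring,
      map_mul]
    ring
  have S1 : ∑ k ∈ range (m + 2), C (rise ((m : ℤ) + 2 + (k : ℤ)) j)
        * ((X + C ((m : ℤ) + 1)) * Q (m + 1) (k : ℤ))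
      = ∑ i ∈ range (j + 1), C (d j i) * ((X + C ((m : ℤ) + 1)) * WQ Q m i) := by
    rw [Finset.sum_range_succ]
    have hz : Q (m + 1) ((m + 1 : ℕ) : ℤ) = 0 :=
      Qzero Q h1k hrec (m + 1) (by omega) ((m + 1 : ℕ) : ℤ) le_rfl
    rw [hz, mul_zero, mul_zero, add_zero]
    have hsw : ∀ k ∈ range (m + 1), C (rise ((m : ℤ) + 2 + (k : ℤ)) j)
          * ((X + C ((m : ℤ) + 1)) * Q (m + 1) (k : ℤ))
        = ∑ i ∈ range (j + 1), C (d j i)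
            * (C (rise ((m : ℤ) + 1 + (k : ℤ)) i) * ((X + C ((m : ℤ) + 1)) * Q (m + 1) (k : ℤ))) := by
      intro k _
      rw [show (m : ℤ) + 2 + (k : ℤ) = ((m : ℤ) + 1 + (k : ℤ)) + 1 by ring, rise_shift, map_sum,
        Finset.sum_mul]
      apply Finset.sum_congr rfl
      intro i _
      rw [map_mul]
      ring
    rw [Finset.sum_congr rfl hsw, Finset.sum_comm]
    apply Finset.sum_congr rfl
    intro i _
    rw [WQ, Finset.mul_sum, Finset.mul_sum]
    apply Finset.sum_congr rfl
    intro k _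
    ring
  have S2 : ∑ k ∈ range (m + 2), C (rise ((m : ℤ) + 2 + (k : ℤ)) j * ((m : ℤ) + (k : ℤ)))
        * Q (m + 1) ((k : ℤ) - 1)
      = ∑ i ∈ range (j + 1), C (d j i) * WQ Q m (i + 1) := by
    rw [Finset.sum_range_succ']
    have hz : C (rise ((m : ℤ) + 2 + ((0 : ℕ) : ℤ)) j * ((m : ℤ) + ((0 : ℕ) : ℤ)))
        * Q (m + 1) (((0 : ℕ) : ℤ) - 1) = 0 := by
      rw [show (((0 : ℕ) : ℤ) - 1) = (-1 : ℤ) by norm_num, hneg (m + 1) (by omega), mul_zero]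
    rw [hz, add_zero]
    have hsw : ∀ k ∈ range (m + 1),
        C (rise ((m : ℤ) + 2 + ((k + 1 : ℕ) : ℤ)) j * ((m : ℤ) + ((k + 1 : ℕ) : ℤ)))
          * Q (m + 1) (((k + 1 : ℕ) : ℤ) - 1)
        = ∑ i ∈ range (j + 1), C (d j i)
            * (C (rise ((m : ℤ) + 1 + (k : ℤ)) (i + 1)) * Q (m + 1) (k : ℤ)) := by
      intro k _
      have e1 : (((k + 1 : ℕ) : ℤ) - 1) = (k : ℤ) := by push_cast; ring
      have e2 : ((m : ℤ) + 2 + ((k + 1 : ℕ) : ℤ)) = ((m : ℤ) + 1 + (k : ℤ)) + 2 := by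
        push_cast; ring
      have e3 : ((m : ℤ) + ((k + 1 : ℕ) : ℤ)) = (m : ℤ) + 1 + (k : ℤ) := by push_cast; ring
      rw [e1, e2, e3, mul_comm (rise (((m : ℤ) + 1 + (k : ℤ)) + 2) j), rise_shift2, map_sum,
        Finset.sum_mul]
      apply Finset.sum_congr rfl
      intro i _
      rw [map_mul]
      ring
    rw [Finset.sum_congr rfl hsw, Finset.sum_comm]
    apply Finset.sum_congr rfl
    intro i _
    rw [WQ, Finset.mul_sum]
  rw [step1, Finset.sum_add_distrib, S1, S2, ← Finset.sum_add_distrib]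
  apply Finset.sum_congr rfl
  intro i _
  ring

lemma WF (h10 : Q 1 0 = 1)
    (hneg : ∀ n : ℕ, 1 ≤ n → Q n (-1) = 0)
    (h1k : ∀ k : ℤ, 1 ≤ k → Q 1 k = 0)
    (hrec : ∀ n : ℕ, 2 ≤ n → ∀ k : ℤ, 0 ≤ k →
      Q n k = (X + C ((n : ℤ) - 1)) * Q (n - 1) k + C ((n : ℤ) + k - 2) * Q (n - 1) (k - 1)) :
    ∀ m j : ℕ, WQ Q m j = fP m j := by
  intro m
  induction m with
  | zero =>
    intro j
    have h1 : WQ Q 0 j = C ((j.factorial : ℤ)) := by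
      rw [WQ, Finset.sum_range_one]
      norm_num [h10, rise_one]
    have h2 : fP 0 j = C ((j.factorial : ℤ)) := by
      rw [fP]
      norm_num [iter_P_self]
    rw [h1, h2]
  | succ m ih =>
    intro j
    rw [Wrec Q hneg h1k hrec m j, ← telescope m j]
    apply Finset.sum_congr rfl
    intro i _
    rw [ih i, ih (i + 1)]

end QPart

end ShorAux

/-- Shor's refinement of Cayley's formula: if `Q(n,k)(x)` are the Shor polynomials,
defined by `Q(1,0) = 1`, `Q(n,−1) = 0`, `Q(1,k) = 0` for `k ≥ 1`, and
`Q(n,k) = (x+n−1)·Q(n−1,k) + (n+k−2)·Q(n−1,k−1)`, then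
`∑_{k=0}^{n−1} Q(n,k)(x) = (x+n)^{n−1}` for all `n ≥ 1`. -/
theorem shor_polynomial_sum (Q : ℕ → ℤ → Polynomial ℤ)
    (h10 : Q 1 0 = 1)
    (hneg : ∀ n : ℕ, 1 ≤ n → Q n (-1) = 0)
    (h1k : ∀ k : ℤ, 1 ≤ k → Q 1 k = 0)
    (hrec : ∀ n : ℕ, 2 ≤ n → ∀ k : ℤ, 0 ≤ k →
      Q n k = (Polynomial.X + Polynomial.C ((n : ℤ) - 1)) * Q (n - 1) k +
        Polynomial.C ((n : ℤ) + k - 2) * Q (n - 1) (k - 1)) :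
    ∀ n : ℕ, 1 ≤ n →
      ∑ k ∈ Finset.range n, Q n (k : ℤ) =
        (Polynomial.X + Polynomial.C (n : ℤ)) ^ (n - 1) := by
  intro n hn
  obtain ⟨m, rfl⟩ : ∃ m, n = m + 1 := ⟨n - 1, by omega⟩
  have h := ShorAux.WF Q h10 hneg h1k hrec m 0
  rw [ShorAux.WQ] at h
  simp only [ShorAux.rise_zero, map_one, one_mul] at h
  rw [ShorAux.fP, Nat.add_zero, Function.iterate_zero, id_eq, ShorAux.P] at h
  rw [h, Nat.add_sub_cancel]
  norm_cast
end

section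
/- With G_k defined by the recursion k·G_k = (1/2)(d²G_{k−1} + ∑_{r=1}^k dG_{r−1}·dG_{k−r}) where d = ∑_{l≥0} V_{l+1}∂/∂V_l and G_0 = V_0, the partition function Z := exp(∑_{k≥0} ħ^k G_k) satisfies the heat-type equation ∂Z/∂ħ = (1/2)·d²Z as an identity of formal power series in ħ. -/
/-!
Cole–Hopf: the recursion for `G_k` says exactly that `F = ∑ ħ^k G_k` solves the Burgers-type
equation `∂F/∂ħ = (1/2)(d²F + (dF)²)`. Both `∂/∂ħ` and `d` are derivations of `HeatRing⟦ħ⟧`, and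
every derivation `D` satisfies `D (exp F) = D F · exp F`. Hence `∂Z/∂ħ = (∂F/∂ħ) Z` and
`d²Z = (d²F + (dF)²) Z`.
-/

open MvPolynomial

/-- The coefficient ring `ℚ[V_0, V_1, V_2, ..., E]`, where the variables indexed
by `Sum.inl l` are the `V_l`, and the extra variable `E = X (Sum.inr ())`
represents `exp(G_0) = exp(V_0)`. -/
abbrev HeatRing : Type := MvPolynomial (ℕ ⊕ Unit) ℚ

/-- The image of each variable under the derivation `d`: `d V_l = V_{l+1}` and
`d E = V_1·E` (since `E` stands for `exp(V_0)`). -/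
noncomputable def dVar : ℕ ⊕ Unit → HeatRing
  | Sum.inl l => X (Sum.inl (l + 1))
  | Sum.inr _ => X (Sum.inl 1) * X (Sum.inr ())

/-- The derivation `d = ∑ V_{l+1} ∂/∂V_l` (with `d(exp V_0) = V_1·exp V_0`). -/
noncomputable def dOp (p : HeatRing) : HeatRing :=
  ∑ v ∈ p.vars, dVar v * MvPolynomial.pderiv v p

/-- `d` applied coefficientwise to a formal power series in `ħ`. -/
noncomputable def dPS (f : PowerSeries HeatRing) : PowerSeries HeatRing :=
  PowerSeries.mk fun n => dOp (PowerSeries.coeff (R := HeatRing) n f)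

/-- Derivative `∂/∂ħ` of a formal power series in `ħ`. -/
noncomputable def hderiv (f : PowerSeries HeatRing) : PowerSeries HeatRing :=
  PowerSeries.mk fun n => ((n : HeatRing) + 1) * PowerSeries.coeff (R := HeatRing) (n + 1) f

/-- The exponential `exp f = ∑_j f^j/j!` of a power series `f` with vanishing
constant term. -/
noncomputable def exp0 (f : PowerSeries HeatRing) : PowerSeries HeatRing :=
  PowerSeries.mk fun n =>
    ∑ j ∈ Finset.range (n + 1),
      ((1 : ℚ) / (Nat.factorial j : ℚ)) • PowerSeries.coeff (R := HeatRing) n (f ^ j)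

open scoped PowerSeries

noncomputable def expPartialSum {A : Type*} [CommRing A] [Algebra ℚ A] (N : ℕ) (a : A) : A :=
  ∑ j ∈ Finset.range (N + 1), ((1 : ℚ) / (j.factorial : ℚ)) • a ^ j

namespace Derivation

section CommRing

variable {R A : Type*} [CommRing R] [CommRing A] [Algebra R A]

theorem finset_sum_apply {ι M : Type*} [AddCommMonoid M] [Module A M] [Module R M]
    (s : Finset ι) (D : ι → Derivation R A M) (a : A) :
    (∑ i ∈ s, D i) a = ∑ i ∈ s, D i a := by
  rw [← coeFnAddMonoidHom_apply, map_sum, Finset.sum_apply]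
  rfl

theorem pow_dvd_of_pow_succ_dvd (D : Derivation R A A) {a f : A} {n : ℕ}
    (h : a ^ (n + 1) ∣ f) : a ^ n ∣ D f := by
  obtain ⟨f, rfl⟩ := h
  rw [leibniz, leibniz_pow, Nat.add_sub_cancel, smul_eq_mul, smul_eq_mul, smul_eq_mul,
    nsmul_eq_mul]
  exact dvd_add ⟨a * D f, by ring⟩ ⟨f * (n + 1 : ℕ) * D a, by ring⟩

noncomputable def powerSeriesMap (D : Derivation R A A) : Derivation R A⟦X⟧ A⟦X⟧ :=
  Derivation.mk'
    { toFun := fun f => PowerSeries.mk fun n => D (PowerSeries.coeff n f)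
      map_add' := fun f g => by ext n; simp
      map_smul' := fun r f => by ext n; simp }
    fun f g => by
      ext n
      simp only [LinearMap.coe_mk, AddHom.coe_mk, PowerSeries.coeff_mk, PowerSeries.coeff_mul,
        map_sum, leibniz, smul_eq_mul, map_add, Finset.sum_add_distrib]
      congr 1
      exact Finset.Nat.sum_antidiagonal_swap
        (f := fun x => PowerSeries.coeff x.1 g * D (PowerSeries.coeff x.2 f))

@[simp]
theorem coeff_powerSeriesMap (D : Derivation R A A) (f : A⟦X⟧) (n : ℕ) :
    PowerSeries.coeff n (D.powerSeriesMap f) = D (PowerSeries.coeff n f) := by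
  simp [powerSeriesMap]

theorem powerSeriesMap_C (D : Derivation R A A) (a : A) :
    D.powerSeriesMap (PowerSeries.C a) = PowerSeries.C (D a) := by
  ext n
  rw [coeff_powerSeriesMap, PowerSeries.coeff_C, PowerSeries.coeff_C]
  split_ifs <;> simp

end CommRing

theorem map_expPartialSum_succ {A : Type*} [CommRing A] [Algebra ℚ A]
    (D : Derivation ℚ A A) (N : ℕ) (a : A) :
    D (expPartialSum (N + 1) a) = D a * expPartialSum N a := by
  rw [expPartialSum, map_sum, Finset.sum_range_succ', expPartialSum, Finset.mul_sum]
  simp only [map_smul, leibniz_pow, pow_zero, map_one_eq_zero, smul_zero, add_zero,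
    Nat.add_sub_cancel]
  refine Finset.sum_congr rfl fun j _ => ?_
  rw [← Nat.cast_smul_eq_nsmul ℚ, smul_smul, smul_eq_mul, mul_smul_comm, mul_comm (D a)]
  congr 1
  rw [Nat.factorial_succ]
  push_cast
  field_simp

end Derivation

theorem X_pow_dvd_exp0_sub_expPartialSum {g : HeatRing⟦X⟧}
    (hg : PowerSeries.constantCoeff g = 0) (N : ℕ) :
    PowerSeries.X ^ (N + 1) ∣ exp0 g - expPartialSum N g := by
  refine PowerSeries.X_pow_dvd_iff.mpr fun m hm => ?_
  have hpow : ∀ j, m < j → PowerSeries.coeff m (g ^ j) = 0 := fun j hj =>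
    PowerSeries.X_pow_dvd_iff.mp (pow_dvd_pow_of_dvd (PowerSeries.X_dvd_iff.mpr hg) j) m hj
  rw [map_sub, exp0, PowerSeries.coeff_mk, expPartialSum, map_sum, sub_eq_zero]
  simp only [PowerSeries.coeff_smul]
  refine Finset.sum_subset (Finset.range_subset_range.mpr (by omega)) fun j _ hj => ?_
  rw [hpow j (by simpa using hj), smul_zero]

namespace Derivation

variable (D : Derivation ℚ HeatRing⟦X⟧ HeatRing⟦X⟧) {g : HeatRing⟦X⟧}

/-- `exp0 g` agrees with `expPartialSum n g` up to order `n` and a derivation loses at most one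
order, so the `n`-th coefficient follows from `map_expPartialSum_succ`. -/
theorem map_exp0 (hg : PowerSeries.constantCoeff g = 0) : D (exp0 g) = D g * exp0 g := by
  refine sub_eq_zero.mp <| PowerSeries.ext fun n => ?_
  have hsplit : D (exp0 g) - D g * exp0 g =
      D (exp0 g - expPartialSum (n + 1) g) + D g * (expPartialSum n g - exp0 g) := by
    rw [map_sub, D.map_expPartialSum_succ]; ring
  have hdvd : PowerSeries.X ^ (n + 1) ∣ D (exp0 g) - D g * exp0 g := by
    rw [hsplit]
    exact dvd_add (D.pow_dvd_of_pow_succ_dvd (X_pow_dvd_exp0_sub_expPartialSum hg (n + 1)))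
      (dvd_mul_of_dvd_right (dvd_sub_comm.mp (X_pow_dvd_exp0_sub_expPartialSum hg n)) _)
  rw [PowerSeries.X_pow_dvd_iff.mp hdvd n n.lt_succ_self, map_zero]

/-- If `E` plays the role of `exp c`, then `E * exp0 g` plays that of `exp (c + g)`. -/
theorem map_mul_exp0 {E c : HeatRing⟦X⟧} (hE : D E = D c * E)
    (hg : PowerSeries.constantCoeff g = 0) :
    D (E * exp0 g) = D (c + g) * (E * exp0 g) := by
  rw [leibniz, D.map_exp0 hg, hE, map_add, smul_eq_mul, smul_eq_mul]
  ring

end Derivation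

theorem dOp_eq_mkDerivation (p : HeatRing) : dOp p = mkDerivation ℚ dVar p := by
  symm
  calc mkDerivation ℚ dVar p
      = (∑ v ∈ p.vars, dVar v • pderiv v : Derivation ℚ HeatRing HeatRing) p :=
        derivation_eq_of_forall_mem_vars fun i hi => by
          rw [Derivation.finset_sum_apply, Finset.sum_eq_single_of_mem i hi]
          · simp [mkDerivation_X]
          · intro j _ hji
            simp [pderiv_X_of_ne hji.symm]
    _ = dOp p := by simp [dOp, Derivation.finset_sum_apply]

noncomputable def dPSDerivation : Derivation ℚ HeatRing⟦X⟧ HeatRing⟦X⟧ :=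
  (mkDerivation ℚ dVar).powerSeriesMap

theorem coe_dPSDerivation : ⇑dPSDerivation = dPS := by
  ext f : 1
  refine PowerSeries.ext fun n => ?_
  rw [dPSDerivation, Derivation.coeff_powerSeriesMap, dPS, PowerSeries.coeff_mk,
    dOp_eq_mkDerivation]

theorem dPSDerivation_C_X (v : ℕ ⊕ Unit) :
    dPSDerivation (PowerSeries.C (X v)) = PowerSeries.C (dVar v) := by
  rw [dPSDerivation, Derivation.powerSeriesMap_C, mkDerivation_X]

noncomputable def hderivDerivation : Derivation ℚ HeatRing⟦X⟧ HeatRing⟦X⟧ :=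
  (PowerSeries.derivative HeatRing).restrictScalars ℚ

theorem coe_hderivDerivation : ⇑hderivDerivation = hderiv := by
  ext f : 1
  refine PowerSeries.ext fun n => ?_
  rw [hderivDerivation, Derivation.coe_restrictScalars, PowerSeries.coeff_derivative, hderiv,
    PowerSeries.coeff_mk]
  ring

theorem hderivDerivation_mk_of_recursion (G : ℕ → HeatRing)
    (hrec : ∀ k : ℕ, 1 ≤ k →
      (k : HeatRing) * G k =
        C (1 / 2 : ℚ) * (dOp (dOp (G (k - 1))) +
          ∑ r ∈ Finset.Icc 1 k, dOp (G (r - 1)) * dOp (G (k - r)))) :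
    hderivDerivation (PowerSeries.mk G) = PowerSeries.C (C (1 / 2 : ℚ)) *
      (dPSDerivation (dPSDerivation (PowerSeries.mk G)) +
        dPSDerivation (PowerSeries.mk G) ^ 2) := by
  refine PowerSeries.ext fun n => ?_
  have hsum : ∑ r ∈ Finset.Icc 1 (n + 1), dOp (G (r - 1)) * dOp (G (n + 1 - r)) =
      ∑ p ∈ Finset.HasAntidiagonal.antidiagonal n, dOp (G p.1) * dOp (G p.2) := by
    rw [Finset.Nat.sum_antidiagonal_eq_sum_range_succ_mk, ← Finset.Ico_add_one_right_eq_Icc,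
      Finset.sum_Ico_eq_sum_range]
    refine Finset.sum_congr (by simp) fun k _ => ?_
    rw [show n + 1 - (1 + k) = n - k by omega, Nat.add_sub_cancel_left]
  have hn := hrec (n + 1) n.succ_pos
  rw [Nat.add_sub_cancel, hsum] at hn
  rw [coe_hderivDerivation, coe_dPSDerivation, hderiv, PowerSeries.coeff_mk, PowerSeries.coeff_mk,
    PowerSeries.coeff_C_mul, map_add, sq, PowerSeries.coeff_mul]
  simp only [dPS, PowerSeries.coeff_mk]
  exact_mod_cast hn

/-- With `G_0 = V_0` and the recursion
`k·G_k = (1/2)(d²G_{k−1} + ∑_{r=1}^k dG_{r−1}·dG_{k−r})`, the partition function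
`Z := exp(∑_{k≥0} ħ^k G_k) = exp(V_0)·exp(∑_{k≥1} ħ^k G_k)` satisfies the heat
equation `∂Z/∂ħ = (1/2)·d²Z` as formal power series in `ħ`. -/
theorem heat_equation_for_partition_function (G : ℕ → HeatRing)
    (hG0 : G 0 = X (Sum.inl 0))
    (hrec : ∀ k : ℕ, 1 ≤ k →
      (k : HeatRing) * G k =
        C (1 / 2 : ℚ) * (dOp (dOp (G (k - 1))) +
          ∑ r ∈ Finset.Icc 1 k, dOp (G (r - 1)) * dOp (G (k - r)))) :
    hderiv (PowerSeries.C (R := HeatRing) (X (Sum.inr ())) *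
        exp0 (PowerSeries.mk fun k => if k = 0 then 0 else G k)) =
      PowerSeries.C (R := HeatRing) (C (1 / 2 : ℚ)) *
        dPS (dPS (PowerSeries.C (R := HeatRing) (X (Sum.inr ())) *
          exp0 (PowerSeries.mk fun k => if k = 0 then 0 else G k))) := by
  rw [← coe_hderivDerivation, ← coe_dPSDerivation]
  set g : HeatRing⟦X⟧ := PowerSeries.mk fun k => if k = 0 then 0 else G k
  set E : HeatRing⟦X⟧ := PowerSeries.C (X (Sum.inr ()))
  set F : HeatRing⟦X⟧ := PowerSeries.mk G
  have hF : PowerSeries.C (G 0) + g = F := by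
    ext (_ | n) <;> simp [g, F]
  have hg : PowerSeries.constantCoeff g = 0 := by simp [g]
  have hZ (D : Derivation ℚ HeatRing⟦X⟧ HeatRing⟦X⟧)
      (hE : D E = D (PowerSeries.C (G 0)) * E) : D (E * exp0 g) = D F * (E * exp0 g) :=
    hF ▸ D.map_mul_exp0 hE hg
  have hZh := hZ hderivDerivation (by simp [E, hderivDerivation])
  have hZd := hZ dPSDerivation (by rw [hG0, dPSDerivation_C_X, dPSDerivation_C_X]; simp [dVar, E])
  calc hderivDerivation (E * exp0 g)
      = hderivDerivation F * (E * exp0 g) := hZh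
    _ = PowerSeries.C (C (1 / 2 : ℚ)) *
          (dPSDerivation (dPSDerivation F) + dPSDerivation F ^ 2) * (E * exp0 g) := by
        rw [hderivDerivation_mk_of_recursion G hrec]
    _ = PowerSeries.C (C (1 / 2 : ℚ)) * dPSDerivation (dPSDerivation F * (E * exp0 g)) := by
        rw [Derivation.leibniz, hZd, smul_eq_mul, smul_eq_mul]
        ring
    _ = PowerSeries.C (C (1 / 2 : ℚ)) * dPSDerivation (dPSDerivation (E * exp0 g)) := by
        rw [hZd]
end
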